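/- arXiv:1905.05981 — 2 statements merged into one kernel-verified Lean document; each statement's English description precedes it below -/
import Mathlib

section
/- Let M ≥ 1, let K : Fin M → ℝ be real values (the values of the local test statistics), and let g : ℝ → ℝ be monotone nondecreasing (the quantile function of the chi-squared distribution with t−w−1 degrees of freedom). For each i define the local confidence c_i = sSup {c ∈ ℝ | K i > g(c)}, and define the global confidence c̄⁰ = sSup {c ∈ ℝ | ∑_{i} K i > M · g(c)}. Assume each set {c | K i > g(c)} is nonempty and bounded above, and that {c | ∑_i K i > M · g(c)} is bounded above. Then c̄⁰ ≥ min_{i} c_i, i.e. the global confidence is bounded below by the minimum of all local confidences. -/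
/-- The global confidence is bounded below by the minimum of all local confidences. -/
theorem global_confidence_ge_min_local_confidence (M : ℕ) (hM : 1 ≤ M)
    (K : Fin M → ℝ) (g : ℝ → ℝ) (hg : Monotone g)
    (hne : ∀ i, {c : ℝ | g c < K i}.Nonempty)
    (hbdd : ∀ i, BddAbove {c : ℝ | g c < K i})
    (hbdd' : BddAbove {c : ℝ | (M : ℝ) * g c < ∑ i, K i}) :
    sSup {c : ℝ | (M : ℝ) * g c < ∑ i, K i} ≥ ⨅ i, sSup {c : ℝ | g c < K i} := by
  have hMpos : 0 < M := hM
  haveI : Nonempty (Fin M) := ⟨⟨0, hMpos⟩⟩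
  -- every c below the infimum belongs to the global set
  have hmem : ∀ c : ℝ, c < (⨅ i, sSup {c : ℝ | g c < K i}) →
      c ∈ {c : ℝ | (M : ℝ) * g c < ∑ i, K i} := by
    intro c hc
    have hlt : ∀ i, g c < K i := by
      intro i
      have hci : c < sSup {c : ℝ | g c < K i} := by
        refine lt_of_lt_of_le hc ?_
        exact ciInf_le (Set.finite_range _).bddBelow i
      obtain ⟨c', hc', hcc'⟩ := exists_lt_of_lt_csSup (hne i) hci
      exact lt_of_le_of_lt (hg hcc'.le) hc'
    have : (M : ℝ) * g c = ∑ _i : Fin M, g c := by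
      simp [Finset.sum_const, mul_comm]
    show (M : ℝ) * g c < ∑ i, K i
    rw [this]
    exact Finset.sum_lt_sum_of_nonempty (by simp [hMpos.ne']) fun i _ => hlt i
  refine le_of_forall_lt fun c hc => ?_
  obtain ⟨c'', hc1, hc2⟩ := exists_between hc
  exact lt_of_lt_of_le hc1 (le_csSup hbdd' (hmem c'' hc2))
end

section
/- Let (U, dist) be a metric space, n ≥ 1, and let a : Fin n → U be dimensional pivots defining the space mapping φ : U → (Fin n → ℝ), φ(o)(d) = dist(a d, o). Let δ > 0 and let lo, hi : Fin p → Fin n → ℝ define kernel partitions V k = {o ∈ U | ∀ d, lo k d ≤ φ(o)(d) ≤ hi k d}, and assume the kernel partitions cover U, i.e. every o ∈ U lies in some V k. Define whole partitions W k = {o ∈ U | ∀ d, lo k d − δ ≤ φ(o)(d) ≤ hi k d + δ}. Then for any two objects o_x, o_y ∈ U with dist(o_x, o_y) < δ, there exists a partition index k such that o_x ∈ V k and o_y ∈ W k. -/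
/-- Lemma 5 (lem-inout) of the paper: for any pair of objects at distance less than `δ`,
there is a partition index `k` such that one object lies in the kernel partition `V k`
and the other lies in the whole partition `W k`. -/
theorem kernel_whole_partition_correct {U : Type*} [MetricSpace U] (n p : ℕ)
    (hn : 1 ≤ n) (a : Fin n → U) (δ : ℝ) (hδ : 0 < δ)
    (lo hi : Fin p → Fin n → ℝ)
    (hcover : ∀ o : U, ∃ k : Fin p,
      ∀ d, lo k d ≤ dist (a d) o ∧ dist (a d) o ≤ hi k d)
    (ox oy : U) (hxy : dist ox oy < δ) :
    ∃ k : Fin p,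
      (∀ d, lo k d ≤ dist (a d) ox ∧ dist (a d) ox ≤ hi k d) ∧
      (∀ d, lo k d - δ ≤ dist (a d) oy ∧ dist (a d) oy ≤ hi k d + δ) := by
  obtain ⟨k, hk⟩ := hcover ox
  refine ⟨k, hk, fun d => ?_⟩
  obtain ⟨h1, h2⟩ := hk d
  have t1 : dist (a d) oy ≤ dist (a d) ox + dist ox oy := dist_triangle _ _ _
  have t2 : dist (a d) ox ≤ dist (a d) oy + dist oy ox := dist_triangle _ _ _
  rw [dist_comm oy ox] at t2
  constructor <;> linarith
end
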